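/- arXiv:2102.02923 — 2 statements merged into one kernel-verified Lean document; each statement's English description precedes it below -/
import Mathlib

section
/- Assume d ≥ 3. Then the cosine of the angle between the population gradient-direction estimate and the true gradient tends to 1 at the boundary point: lim_{δ → 0⁺} ⟪g(δ), ∇S(x_t)⟫ / (‖g(δ)‖ · ‖∇S(x_t)‖) = 1 (in particular g(δ) ≠ 0 for all sufficiently small δ > 0). -/
open MeasureTheory Metric Filter
open scoped RealInnerProductSpace ENNReal

/-- sign(t) = 1 if t > 0 and -1 otherwise. -/
noncomputable def sgn (t : ℝ) : ℝ := if 0 < t then 1 else -1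

/-- The uniform probability measure on the unit sphere of `EuclideanSpace ℝ (Fin d)`:
the (d-1)-dimensional Hausdorff measure restricted to the sphere, normalized to mass 1. -/
noncomputable def sphereUniform (d : ℕ) : Measure (EuclideanSpace ℝ (Fin d)) :=
  (μH[(d : ℝ) - 1] (Metric.sphere (0 : EuclideanSpace ℝ (Fin d)) 1))⁻¹ •
    (μH[(d : ℝ) - 1]).restrict (Metric.sphere (0 : EuclideanSpace ℝ (Fin d)) 1)

/-- The population gradient-direction estimate
`g(δ) = ∫_S sign(S (x_t + δ u)) · u dσ(u)`. -/
noncomputable def gEst (d : ℕ) (S : EuclideanSpace ℝ (Fin d) → ℝ)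
    (xt : EuclideanSpace ℝ (Fin d)) (δ : ℝ) : EuclideanSpace ℝ (Fin d) :=
  ∫ u, sgn (S (xt + δ • u)) • u ∂(sphereUniform d)

/-!
Write `v = ∇S(x_t)`. Since `∇S` is `L`-Lipschitz, `|S(x_t + δu) - δ⟪v, u⟫| ≤ L δ²`, so the signs of
`S(x_t + δu)` and `⟪v, u⟫` agree outside the band `|⟪v, u⟫| ≤ L δ`. The σ-measure of that band
tends to the measure of the great subsphere `v^⊥ ∩ S`, which is zero, so `g(δ)` tends to
`w = ∫ sign ⟪v, u⟫ u dσ`. Every linear isometry fixing `v` preserves σ and hence fixes `w`; using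
reflections this forces `w ∈ ℝ v`, and `⟪v, w⟫ = ∫ |⟪v, u⟫| dσ > 0`, so `w` is a positive multiple
of `v`.

That σ is a probability measure with null great subspheres comes from `μH[d-1]` being a Haar
measure on every hyperplane: the orthogonal projection of the sphere onto a hyperplane contains its
unit ball, each cap `⟪e, u⟫ > 1/2` is a Lipschitz (radial projection) image of a ball in `e^⊥`, and
`v^⊥ ∩ S` is the unit sphere of the hyperplane `v^⊥`.
-/

open Module Set Topology

theorem measurable_sgn : Measurable sgn :=
  Measurable.ite measurableSet_Ioi measurable_const measurable_const

theorem abs_sgn (t : ℝ) : |sgn t| = 1 := by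
  unfold sgn; split_ifs <;> norm_num

theorem sgn_mul_self (t : ℝ) : sgn t * t = |t| := by
  unfold sgn; split_ifs with h
  · rw [one_mul, abs_of_pos h]
  · rw [abs_of_nonpos (not_lt.mp h), neg_one_mul]

theorem sgn_mul_of_pos {a : ℝ} (ha : 0 < a) (t : ℝ) : sgn (a * t) = sgn t := by
  simp only [sgn, mul_pos_iff_of_pos_left ha]

theorem sgn_eq_of_abs_sub_lt {s t : ℝ} (h : |s - t| < |t|) : sgn s = sgn t := by
  have := abs_sub_lt_iff.mp h
  unfold sgn
  rcases lt_or_ge 0 t with ht | ht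
  · rw [abs_of_pos ht] at this
    rw [if_pos (by linarith), if_pos ht]
  · rw [abs_of_nonpos ht] at this
    rw [if_neg (by linarith), if_neg (by linarith)]

theorem lipschitzOnWith_smul_inv_norm {F : Type*} [NormedAddCommGroup F] [NormedSpace ℝ F] :
    LipschitzOnWith 2 (fun x : F => ‖x‖⁻¹ • x) {x | 1 ≤ ‖x‖} := by
  refine LipschitzOnWith.of_dist_le_mul fun x (hx : 1 ≤ ‖x‖) y (hy : 1 ≤ ‖y‖) => ?_
  have hx0 : 0 < ‖x‖ := one_pos.trans_le hx
  have hy0 : 0 < ‖y‖ := one_pos.trans_le hy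
  rw [dist_eq_norm, dist_eq_norm, NNReal.coe_ofNat]
  have hsplit : ‖x‖⁻¹ • x - ‖y‖⁻¹ • y =
      ‖x‖⁻¹ • (x - y) + ((‖y‖ - ‖x‖) / ‖x‖) • (‖y‖⁻¹ • y) := by
    have hcoef : (‖y‖ - ‖x‖) / ‖x‖ * ‖y‖⁻¹ = ‖x‖⁻¹ - ‖y‖⁻¹ := by field_simp
    rw [smul_smul, hcoef, sub_smul, smul_sub]
    abel
  have hunit : ‖‖y‖⁻¹ • y‖ = 1 := by rw [norm_smul, norm_inv, norm_norm, inv_mul_cancel₀ hy0.ne']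
  calc ‖‖x‖⁻¹ • x - ‖y‖⁻¹ • y‖
      ≤ ‖x‖⁻¹ * ‖x - y‖ + |‖y‖ - ‖x‖| / ‖x‖ := by
        rw [hsplit]
        refine (norm_add_le _ _).trans_eq ?_
        rw [norm_smul, norm_smul, hunit, norm_inv, norm_norm, Real.norm_eq_abs, abs_div,
          abs_of_pos hx0, mul_one]
    _ ≤ ‖x - y‖ + ‖x - y‖ := by
        rw [inv_mul_eq_div]
        gcongr
        · exact div_le_self (norm_nonneg _) hx
        · exact (div_le_self (abs_nonneg _) hx).trans
            (by simpa [norm_sub_rev] using abs_norm_sub_norm_le y x)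
    _ = 2 * ‖x - y‖ := by ring

theorem mem_span_singleton_of_forall_linearIsometryEquiv
    {E : Type*} [NormedAddCommGroup E] [InnerProductSpace ℝ E] {v w : E}
    (h : ∀ R : E ≃ₗᵢ[ℝ] E, R v = v → R w = w) : w ∈ ℝ ∙ v := by
  rw [← Submodule.orthogonal_orthogonal (ℝ ∙ v), Submodule.mem_orthogonal]
  intro y hy
  have hyv : ⟪y, v⟫ = 0 := (Submodule.mem_orthogonal_singleton_iff_inner_left).mp hy
  set R := (ℝ ∙ y)ᗮ.reflection
  have hRv : R v = v := Submodule.reflection_mem_subspace_eq_self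
    ((Submodule.mem_orthogonal_singleton_iff_inner_right).mpr hyv)
  have : ⟪y, w⟫ = -⟪y, w⟫ := calc
    ⟪y, w⟫ = ⟪R y, R w⟫ := (R.inner_map_map y w).symm
    _ = -⟪y, w⟫ := by
      rw [Submodule.reflection_orthogonalComplement_singleton_eq_neg, h R hRv, inner_neg_left]
  linarith

section HausdorffSphere

variable {E : Type*} [NormedAddCommGroup E] [InnerProductSpace ℝ E] [FiniteDimensional ℝ E]
  [MeasurableSpace E] [BorelSpace E] {n : ℕ}

theorem isAddHaarMeasure_hausdorffMeasure_orthogonal (hE : finrank ℝ E = n + 1) {v : E}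
    (hv : v ≠ 0) : (μH[n] : Measure (ℝ ∙ v)ᗮ).IsAddHaarMeasure := by
  have : Fact (finrank ℝ E = n + 1) := ⟨hE⟩
  rw [← Submodule.finrank_orthogonal_span_singleton (𝕜 := ℝ) (n := n) hv]
  infer_instance

theorem hausdorffMeasure_sphere_pos (hE : finrank ℝ E = n + 1) :
    0 < μH[n] (sphere (0 : E) 1) := by
  have : Nontrivial E := Module.nontrivial_of_finrank_eq_succ hE
  obtain ⟨e, he⟩ := exists_norm_eq E zero_le_one
  have := isAddHaarMeasure_hausdorffMeasure_orthogonal hE (norm_ne_zero_iff.mp (he ▸ one_ne_zero))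
  set W := (ℝ ∙ e)ᗮ
  have hball : closedBall (0 : W) 1 ⊆ W.orthogonalProjectionOnto '' sphere 0 1 := by
    intro w hw
    rw [mem_closedBall_zero_iff] at hw
    have horth : ⟪(w : E), √(1 - ‖w‖ ^ 2) • e⟫ = 0 := by
      rw [real_inner_smul_right, real_inner_comm,
        (Submodule.mem_orthogonal_singleton_iff_inner_right).mp w.2, mul_zero]
    refine ⟨w + √(1 - ‖w‖ ^ 2) • e, ?_, ?_⟩
    · rw [mem_sphere_zero_iff_norm, norm_add_eq_sqrt_iff_real_inner_eq_zero.mpr horth, norm_smul,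
        he, mul_one, Real.norm_of_nonneg (Real.sqrt_nonneg _),
        Real.mul_self_sqrt (by nlinarith [norm_nonneg w]), Submodule.coe_norm]
      ring_nf
      exact Real.sqrt_one
    · rw [map_add, map_smul, Submodule.orthogonalProjectionOnto_mem_subspace_eq_self,
        Submodule.orthogonalProjectionOnto_orthogonalComplement_singleton_eq_zero, smul_zero,
        add_zero]
  calc 0 < μH[n] (closedBall (0 : W) 1) := measure_closedBall_pos _ _ one_pos
    _ ≤ μH[n] (W.orthogonalProjectionOnto '' sphere (0 : E) 1) := measure_mono hball
    _ ≤ μH[n] (sphere (0 : E) 1) :=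
      hausdorffMeasure_orthogonalProjectionOnto_le W _ _ n.cast_nonneg

theorem hausdorffMeasure_sphere_inter_inner_gt_lt_top (hE : finrank ℝ E = n + 1) {e : E}
    (he : ‖e‖ = 1) : μH[n] (sphere (0 : E) 1 ∩ {u | 1 / 2 < ⟪e, u⟫}) < ∞ := by
  have := isAddHaarMeasure_hausdorffMeasure_orthogonal hE (norm_ne_zero_iff.mp (he ▸ one_ne_zero))
  set W := (ℝ ∙ e)ᗮ
  set φ : W → E := fun w => ‖e + w‖⁻¹ • (e + w)
  have hφ : LipschitzWith 2 φ := by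
    have hshift : LipschitzWith 1 (fun w : W => e + w) :=
      (Isometry.of_dist_eq fun x y => by rw [dist_add_left]; rfl).lipschitz
    have hmaps : MapsTo (fun w : W => e + w) univ {x | 1 ≤ ‖x‖} := fun w _ => by
      have hew : ⟪e, (w : E)⟫ = 0 := (Submodule.mem_orthogonal_singleton_iff_inner_right).mp w.2
      rw [mem_ofPred_eq, norm_add_eq_sqrt_iff_real_inner_eq_zero.mpr hew, he, Real.one_le_sqrt]
      nlinarith [norm_nonneg (w : E)]
    have := lipschitzOnWith_smul_inv_norm.comp hshift.lipschitzOnWith hmaps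
    rwa [mul_one, lipschitzOnWith_univ] at this
  have hcap : sphere (0 : E) 1 ∩ {u | 1 / 2 < ⟪e, u⟫} ⊆ φ '' closedBall 0 3 := by
    rintro u ⟨hu, hhalf : 1 / 2 < ⟪e, u⟫⟩
    rw [mem_sphere_zero_iff_norm] at hu
    have hc : 0 < ⟪e, u⟫ := by linarith
    have hw : ⟪e, ⟪e, u⟫⁻¹ • u - e⟫ = 0 := by
      rw [inner_sub_right, real_inner_smul_right, inv_mul_cancel₀ hc.ne',
        real_inner_self_eq_norm_sq, he]
      norm_num
    refine ⟨⟨_, (Submodule.mem_orthogonal_singleton_iff_inner_right).mpr hw⟩, ?_, ?_⟩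
    · rw [mem_closedBall_zero_iff, Submodule.coe_norm]
      calc ‖⟪e, u⟫⁻¹ • u - e‖ ≤ ‖⟪e, u⟫⁻¹ • u‖ + ‖e‖ := norm_sub_le _ _
        _ ≤ 3 := by
          rw [norm_smul, hu, he, mul_one, norm_inv, Real.norm_of_nonneg hc.le]
          linarith [(inv_lt_comm₀ hc two_pos).mpr (by linarith)]
    · simp only [φ, add_sub_cancel, norm_smul, hu, norm_inv, Real.norm_of_nonneg hc.le, mul_one,
        inv_inv, smul_smul, mul_inv_cancel₀ hc.ne', one_smul]
  calc μH[n] (sphere (0 : E) 1 ∩ {u | 1 / 2 < ⟪e, u⟫})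
      ≤ μH[n] (φ '' closedBall 0 3) := measure_mono hcap
    _ ≤ 2 ^ (n : ℝ) * μH[n] (closedBall (0 : W) 3) :=
      hφ.hausdorffMeasure_image_le n.cast_nonneg _
    _ < ∞ := ENNReal.mul_lt_top (by simp) (isCompact_closedBall _ _).measure_lt_top

theorem hausdorffMeasure_sphere_lt_top (hE : finrank ℝ E = n + 1) :
    μH[n] (sphere (0 : E) 1) < ∞ := by
  refine (isCompact_sphere 0 1).measure_lt_top_of_nhdsWithin fun e he => ?_
  rw [mem_sphere_zero_iff_norm] at he
  have hcap : {u | 1 / 2 < ⟪e, u⟫} ∈ 𝓝 e := by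
    refine (isOpen_lt continuous_const (continuous_const.inner continuous_id)).mem_nhds ?_
    show 1 / 2 < ⟪e, e⟫
    rw [real_inner_self_eq_norm_sq, he]
    norm_num
  exact ⟨_, inter_mem_nhdsWithin _ hcap, hausdorffMeasure_sphere_inter_inner_gt_lt_top hE he⟩

theorem hausdorffMeasure_inner_eq_zero_inter_sphere (hE : finrank ℝ E = n + 1) {v : E}
    (hv : v ≠ 0) : μH[n] ({u | ⟪v, u⟫ = 0} ∩ sphere (0 : E) 1) = 0 := by
  have := isAddHaarMeasure_hausdorffMeasure_orthogonal hE hv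
  set W := (ℝ ∙ v)ᗮ
  have hsub : {u | ⟪v, u⟫ = 0} ∩ sphere (0 : E) 1 ⊆ ((↑) : W → E) '' sphere 0 1 :=
    fun u ⟨hvu, hu⟩ => ⟨⟨u, (Submodule.mem_orthogonal_singleton_iff_inner_right).mpr hvu⟩,
      by simpa using hu, rfl⟩
  refine measure_mono_null hsub ?_
  rw [isometry_subtype_coe.hausdorffMeasure_image (Or.inl n.cast_nonneg)]
  exact Measure.addHaar_sphere_of_ne_zero _ _ one_ne_zero

end HausdorffSphere

theorem sphereUniform_succ (n : ℕ) : sphereUniform (n + 1) =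
    (μH[n] (sphere (0 : EuclideanSpace ℝ (Fin (n + 1))) 1))⁻¹ • (μH[n]).restrict (sphere 0 1) := by
  rw [sphereUniform, Nat.cast_succ, add_sub_cancel_right]

namespace sphereUniform

instance isProbabilityMeasure (n : ℕ) : IsProbabilityMeasure (sphereUniform (n + 1)) := by
  constructor
  rw [sphereUniform_succ, Measure.smul_apply, Measure.restrict_apply_univ, smul_eq_mul]
  exact ENNReal.inv_mul_cancel (hausdorffMeasure_sphere_pos finrank_euclideanSpace_fin).ne'
    (hausdorffMeasure_sphere_lt_top finrank_euclideanSpace_fin).ne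

theorem ae_norm_eq_one (d : ℕ) : ∀ᵐ u ∂sphereUniform d, ‖u‖ = 1 :=
  Measure.ae_smul_measure ((ae_restrict_mem isClosed_sphere.measurableSet).mono
    fun _ => mem_sphere_zero_iff_norm.mp) _

theorem measurePreserving (d : ℕ)
    (R : EuclideanSpace ℝ (Fin d) ≃ₗᵢ[ℝ] EuclideanSpace ℝ (Fin d)) :
    MeasurePreserving R (sphereUniform d) (sphereUniform d) := by
  have hR : R ⁻¹' sphere 0 1 = sphere 0 1 := by ext; simp
  have := (R.toIsometryEquiv.measurePreserving_hausdorffMeasure ((d : ℝ) - 1)).restrict_preimage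
    (isClosed_sphere (x := (0 : EuclideanSpace ℝ (Fin d))) (ε := 1)).measurableSet
  rw [LinearIsometryEquiv.coe_toIsometryEquiv, hR] at this
  exact this.smul_measure _

theorem measure_inner_eq_zero (n : ℕ) {v : EuclideanSpace ℝ (Fin (n + 1))} (hv : v ≠ 0) :
    sphereUniform (n + 1) {u | ⟪v, u⟫ = 0} = 0 := by
  rw [sphereUniform_succ, Measure.smul_apply,
    Measure.restrict_apply' isClosed_sphere.measurableSet,
    hausdorffMeasure_inner_eq_zero_inter_sphere finrank_euclideanSpace_fin hv, smul_zero]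

end sphereUniform

section SignIntegral

variable {E : Type*} [NormedAddCommGroup E] [InnerProductSpace ℝ E]
  [MeasurableSpace E] [BorelSpace E] {μ : Measure E}

theorem integral_abs_inner_pos [IsProbabilityMeasure μ] (hμ : ∀ᵐ u ∂μ, ‖u‖ = 1) {v : E}
    (hv : μ {u | ⟪v, u⟫ = 0} = 0) : 0 < ∫ u, |⟪v, u⟫| ∂μ := by
  have hint : Integrable (fun u => |⟪v, u⟫|) μ := by
    refine Integrable.of_bound
      (continuous_const.inner continuous_id).abs.aestronglyMeasurable ‖v‖ ?_
    filter_upwards [hμ] with u hu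
    rw [Real.norm_eq_abs, abs_abs]
    exact (abs_real_inner_le_norm v u).trans_eq (by rw [hu, mul_one])
  rw [integral_pos_iff_support_of_nonneg (fun _ => abs_nonneg _) hint]
  have hsupp : Function.support (fun u => |⟪v, u⟫|) = {u | ⟪v, u⟫ = 0}ᶜ := by ext; simp
  rw [hsupp, pos_iff_ne_zero]
  intro h
  simpa [hv, h] using measure_univ_le_add_compl (μ := μ) {u | ⟪v, u⟫ = 0}

variable [FiniteDimensional ℝ E]

theorem integrable_sgn_smul [IsFiniteMeasure μ] (hμ : ∀ᵐ u ∂μ, ‖u‖ = 1) {f : E → ℝ}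
    (hf : Measurable f) : Integrable (fun u => sgn (f u) • u) μ := by
  refine Integrable.of_bound
    ((measurable_sgn.comp hf).smul measurable_id).aestronglyMeasurable 1 ?_
  filter_upwards [hμ] with u hu
  rw [norm_smul, Real.norm_eq_abs, abs_sgn, hu, one_mul]

theorem norm_integral_sgn_smul_sub_le [IsFiniteMeasure μ] (hμ : ∀ᵐ u ∂μ, ‖u‖ = 1)
    {f g : E → ℝ} (hf : Measurable f) (hg : Measurable g) {B : Set E} (hB : MeasurableSet B)
    (hfg : ∀ u, ‖u‖ = 1 → u ∉ B → sgn (f u) = sgn (g u)) :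
    ‖∫ u, sgn (f u) • u ∂μ - ∫ u, sgn (g u) • u ∂μ‖ ≤ 2 * μ.real B := by
  rw [← integral_sub (integrable_sgn_smul hμ hf) (integrable_sgn_smul hμ hg)]
  calc ‖∫ u, (sgn (f u) • u - sgn (g u) • u) ∂μ‖
      ≤ ∫ u, B.indicator (fun _ => (2 : ℝ)) u ∂μ := by
        refine norm_integral_le_of_norm_le ((integrable_const 2).indicator hB) ?_
        filter_upwards [hμ] with u hu
        by_cases huB : u ∈ B
        · rw [indicator_of_mem huB, ← sub_smul, norm_smul, hu, mul_one]
          refine (norm_sub_le _ _).trans_eq ?_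
          rw [Real.norm_eq_abs, Real.norm_eq_abs, abs_sgn, abs_sgn, one_add_one_eq_two]
        · rw [indicator_of_notMem huB, hfg u hu huB, sub_self, norm_zero]
    _ = 2 * μ.real B := by rw [integral_indicator_const _ hB, smul_eq_mul, mul_comm]

theorem apply_integral_sgn_inner_smul_eq_self
    (hinv : ∀ R : E ≃ₗᵢ[ℝ] E, MeasurePreserving R μ μ) {v : E} (R : E ≃ₗᵢ[ℝ] E)
    (hRv : R v = v) : R (∫ u, sgn ⟪v, u⟫ • u ∂μ) = ∫ u, sgn ⟪v, u⟫ • u ∂μ := by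
  have hinner (u : E) : ⟪v, R u⟫ = ⟪v, u⟫ := by simpa only [hRv] using R.inner_map_map v u
  calc R (∫ u, sgn ⟪v, u⟫ • u ∂μ) = ∫ u, R (sgn ⟪v, u⟫ • u) ∂μ :=
        (R.toLinearIsometry.integral_comp_comm _).symm
    _ = ∫ u, sgn ⟪v, R u⟫ • R u ∂μ := by simp only [map_smul, hinner]
    _ = ∫ u, sgn ⟪v, u⟫ • u ∂μ :=
        (hinv R).integral_comp R.toHomeomorph.measurableEmbedding (fun u => sgn ⟪v, u⟫ • u)

theorem exists_pos_integral_sgn_inner_smul_eq [IsProbabilityMeasure μ]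
    (hμ : ∀ᵐ u ∂μ, ‖u‖ = 1) (hinv : ∀ R : E ≃ₗᵢ[ℝ] E, MeasurePreserving R μ μ) {v : E}
    (hv : μ {u | ⟪v, u⟫ = 0} = 0) : ∃ c : ℝ, 0 < c ∧ ∫ u, sgn ⟪v, u⟫ • u ∂μ = c • v := by
  obtain ⟨c, hc⟩ := Submodule.mem_span_singleton.mp <|
    mem_span_singleton_of_forall_linearIsometryEquiv (v := v) fun R hR =>
      apply_integral_sgn_inner_smul_eq_self hinv R hR
  have hinner : ⟪v, ∫ u, sgn ⟪v, u⟫ • u ∂μ⟫ = ∫ u, |⟪v, u⟫| ∂μ := by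
    rw [← integral_inner (integrable_sgn_smul hμ (f := (⟪v, ·⟫))
      (measurable_const.inner measurable_id))]
    simp_rw [real_inner_smul_right, sgn_mul_self]
  refine ⟨c, ?_, hc.symm⟩
  have hpos := integral_abs_inner_pos hμ hv
  rw [← hinner, ← hc, real_inner_smul_right, real_inner_self_eq_norm_sq] at hpos
  exact pos_of_mul_pos_left hpos (sq_nonneg _)

end SignIntegral

theorem norm_image_add_sub_sub_fderiv_le {E F : Type*} [NormedAddCommGroup E] [NormedSpace ℝ E]
    [NormedAddCommGroup F] [NormedSpace ℝ F] {f : E → F} (hf : Differentiable ℝ f) {x : E}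
    {C : ℝ} (hC : 0 ≤ C) (hlip : ∀ y, ‖fderiv ℝ f y - fderiv ℝ f x‖ ≤ C * ‖y - x‖) (h : E) :
    ‖f (x + h) - f x - fderiv ℝ f x h‖ ≤ C * ‖h‖ ^ 2 := by
  set g : E → F := fun y => f y - fderiv ℝ f x y
  have hg (y : E) : HasFDerivWithinAt g (fderiv ℝ f y - fderiv ℝ f x) (closedBall x ‖h‖) y :=
    ((hf y).hasFDerivAt.sub (fderiv ℝ f x).hasFDerivAt).hasFDerivWithinAt
  have hbound (y : E) (hy : y ∈ closedBall x ‖h‖) : ‖fderiv ℝ f y - fderiv ℝ f x‖ ≤ C * ‖h‖ :=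
    (hlip y).trans (by gcongr; exact mem_closedBall_iff_norm.mp hy)
  have hmvt := (convex_closedBall x ‖h‖).norm_image_sub_le_of_norm_hasFDerivWithin_le
    (fun y _ => hg y) hbound (mem_closedBall_self (norm_nonneg h))
    (by rw [mem_closedBall_iff_norm, add_sub_cancel_left])
  calc ‖f (x + h) - f x - fderiv ℝ f x h‖ = ‖g (x + h) - g x‖ := by
        simp only [g, map_add]; congr 1; abel
    _ ≤ C * ‖h‖ * ‖x + h - x‖ := hmvt
    _ = C * ‖h‖ ^ 2 := by rw [add_sub_cancel_left]; ring

theorem tendsto_measureReal_setOf_abs_le {α : Type*} [MeasurableSpace α] {μ : Measure α}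
    [IsFiniteMeasure μ] {f : α → ℝ} (hf : Measurable f) (h0 : μ {x | f x = 0} = 0) :
    Tendsto (fun r => μ.real {x | |f x| ≤ r}) (𝓝 0) (𝓝 0) := by
  have hinter : (⋂ r > (0 : ℝ), {x | |f x| ≤ r}) = {x | f x = 0} := by
    ext x
    simp only [mem_iInter, mem_ofPred_eq, ← abs_nonpos_iff]
    exact ⟨fun h => le_of_forall_pos_le_add fun ε hε => by simpa using h ε hε,
      fun h r hr => h.trans hr.le⟩
  have hGT : Tendsto (fun r => μ {x | |f x| ≤ r}) (𝓝[>] 0) (𝓝 0) := by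
    have := tendsto_measure_biInter_gt (μ := μ) (s := fun r => {x | |f x| ≤ r}) (a := 0)
      (fun r _ => (measurableSet_le hf.abs measurable_const).nullMeasurableSet)
      (fun i j _ hij x hx => le_trans hx hij) ⟨1, one_pos, measure_ne_top _ _⟩
    rwa [hinter, h0] at this
  have hLE : ∀ r ≤ (0 : ℝ), μ {x | |f x| ≤ r} = 0 := fun r hr =>
    measure_mono_null (fun x hx => abs_nonpos_iff.mp (le_trans hx hr)) h0
  have : Tendsto (fun r => μ {x | |f x| ≤ r}) (𝓝 0) (𝓝 0) := by
    rw [← nhdsLE_sup_nhdsGT, tendsto_sup]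
    refine ⟨tendsto_const_nhds.congr' ?_, hGT⟩
    filter_upwards [self_mem_nhdsWithin] with r hr using (hLE r hr).symm
  exact (ENNReal.tendsto_toReal ENNReal.zero_ne_top).comp this

section Gradient

variable {E : Type*} [NormedAddCommGroup E] [InnerProductSpace ℝ E] [CompleteSpace E]
  {S : E → ℝ} {L : ℝ}

theorem abs_image_add_sub_sub_inner_gradient_le (hS : Differentiable ℝ S) (hL : 0 ≤ L)
    (hLip : ∀ x y, ‖gradient S x - gradient S y‖ ≤ L * ‖x - y‖) (x h : E) :
    |S (x + h) - S x - ⟪gradient S x, h⟫| ≤ L * ‖h‖ ^ 2 := by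
  have hfderiv (y : E) : fderiv ℝ S y = InnerProductSpace.toDual ℝ E (gradient S y) :=
    (hS y).hasGradientAt.hasFDerivAt.fderiv
  have := norm_image_add_sub_sub_fderiv_le hS hL (x := x) (fun y => by
    rw [hfderiv, hfderiv, ← map_sub, LinearIsometryEquiv.norm_map]; exact hLip y x) h
  rwa [hfderiv, InnerProductSpace.toDual_apply_apply, Real.norm_eq_abs] at this

theorem sgn_image_add_smul_eq_sgn_inner (hS : Differentiable ℝ S) (hL : 0 ≤ L)
    (hLip : ∀ x y, ‖gradient S x - gradient S y‖ ≤ L * ‖x - y‖) {x : E} (hx : S x = 0)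
    {δ : ℝ} (hδ : 0 < δ) {u : E} (hu : ‖u‖ = 1) (hfar : L * δ < |⟪gradient S x, u⟫|) :
    sgn (S (x + δ • u)) = sgn ⟪gradient S x, u⟫ := by
  rw [← sgn_mul_of_pos hδ ⟪gradient S x, u⟫]
  refine sgn_eq_of_abs_sub_lt ?_
  have := abs_image_add_sub_sub_inner_gradient_le hS hL hLip x (δ • u)
  rw [hx, sub_zero, real_inner_smul_right, norm_smul, Real.norm_of_nonneg hδ.le, hu,
    mul_one] at this
  calc |S (x + δ • u) - δ * ⟪gradient S x, u⟫| ≤ L * δ ^ 2 := this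
    _ = δ * (L * δ) := by ring
    _ < δ * |⟪gradient S x, u⟫| := by gcongr
    _ = |δ * ⟪gradient S x, u⟫| := by rw [abs_mul, abs_of_pos hδ]

variable [FiniteDimensional ℝ E] [MeasurableSpace E] [BorelSpace E] {μ : Measure E}
  [IsFiniteMeasure μ]

theorem norm_integral_sgn_image_sub_le (hμ : ∀ᵐ u ∂μ, ‖u‖ = 1) (hS : Differentiable ℝ S)
    (hL : 0 ≤ L) (hLip : ∀ x y, ‖gradient S x - gradient S y‖ ≤ L * ‖x - y‖) {x : E}
    (hx : S x = 0) {δ : ℝ} (hδ : 0 < δ) :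
    ‖∫ u, sgn (S (x + δ • u)) • u ∂μ - ∫ u, sgn ⟪gradient S x, u⟫ • u ∂μ‖
      ≤ 2 * μ.real {u | |⟪gradient S x, u⟫| ≤ L * δ} :=
  norm_integral_sgn_smul_sub_le hμ
    (hS.continuous.comp (continuous_const.add (continuous_const_smul δ))).measurable
    (measurable_const.inner measurable_id)
    (measurableSet_le (measurable_const.inner measurable_id).abs measurable_const)
    fun _ hu hfar => sgn_image_add_smul_eq_sgn_inner hS hL hLip hx hδ hu (not_le.mp hfar)

theorem tendsto_integral_sgn_image (hμ : ∀ᵐ u ∂μ, ‖u‖ = 1) (hS : Differentiable ℝ S)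
    (hL : 0 ≤ L) (hLip : ∀ x y, ‖gradient S x - gradient S y‖ ≤ L * ‖x - y‖) {x : E}
    (hx : S x = 0) (hnull : μ {u | ⟪gradient S x, u⟫ = 0} = 0) :
    Tendsto (fun δ : ℝ => ∫ u, sgn (S (x + δ • u)) • u ∂μ) (𝓝[>] 0)
      (𝓝 (∫ u, sgn ⟪gradient S x, u⟫ • u ∂μ)) := by
  have hband : Tendsto (fun δ => 2 * μ.real {u | |⟪gradient S x, u⟫| ≤ L * δ}) (𝓝[>] 0)
      (𝓝 0) := by
    have := (tendsto_measureReal_setOf_abs_le (measurable_const.inner measurable_id) hnull).comp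
      ((continuous_const_mul L).tendsto' 0 0 (mul_zero L))
    simpa using (this.mono_left nhdsWithin_le_nhds).const_mul 2
  rw [tendsto_iff_norm_sub_tendsto_zero]
  refine squeeze_zero' (Eventually.of_forall fun _ => norm_nonneg _) ?_ hband
  filter_upwards [self_mem_nhdsWithin] with δ (hδ : 0 < δ)
  exact norm_integral_sgn_image_sub_le hμ hS hL hLip hx hδ

end Gradient

theorem stmt_0_general (d : ℕ) (L : ℝ)
    (S : EuclideanSpace ℝ (Fin d) → ℝ) (hS : Differentiable ℝ S)
    (hLip : ∀ x y : EuclideanSpace ℝ (Fin d),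
      ‖gradient S x - gradient S y‖ ≤ L * ‖x - y‖)
    (xt : EuclideanSpace ℝ (Fin d)) (hxt : S xt = 0) (hgrad : gradient S xt ≠ 0) :
    Tendsto (fun δ : ℝ =>
        ⟪gEst d S xt δ, gradient S xt⟫ / (‖gEst d S xt δ‖ * ‖gradient S xt‖))
      (nhdsWithin 0 (Set.Ioi 0)) (nhds 1)
    ∧ ∀ᶠ (δ : ℝ) in nhdsWithin 0 (Set.Ioi 0), gEst d S xt δ ≠ 0 := by
  obtain ⟨n, rfl⟩ : ∃ n, d = n + 1 :=
    Nat.exists_eq_succ_of_ne_zero fun hd => hgrad (by subst hd; exact Subsingleton.elim _ _)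
  set v := gradient S xt
  have hL : 0 ≤ L := by
    have := (norm_nonneg _).trans (hLip (xt + v) xt)
    rw [add_sub_cancel_left] at this
    exact nonneg_of_mul_nonneg_left this (norm_pos_iff.mpr hgrad)
  have hnull := sphereUniform.measure_inner_eq_zero n hgrad
  obtain ⟨c, hc, hw⟩ := exists_pos_integral_sgn_inner_smul_eq
    (sphereUniform.ae_norm_eq_one _) (sphereUniform.measurePreserving _) hnull
  have hg : Tendsto (gEst (n + 1) S xt) (𝓝[>] 0) (𝓝 (c • v)) :=
    hw ▸ tendsto_integral_sgn_image (sphereUniform.ae_norm_eq_one _) hS hL hLip hxt hnull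
  have hcv : c • v ≠ 0 := smul_ne_zero hc.ne' hgrad
  refine ⟨?_, hg.eventually_ne hcv⟩
  have hcos : ⟪c • v, v⟫ / (‖c • v‖ * ‖v‖) = 1 := by
    rw [real_inner_smul_left, real_inner_self_eq_norm_sq, norm_smul, Real.norm_of_nonneg hc.le]
    field_simp
  have hlim := (hg.inner (tendsto_const_nhds (x := v))).div
    (hg.norm.mul (tendsto_const_nhds (x := ‖v‖)))
    (mul_ne_zero (norm_ne_zero_iff.mpr hcv) (norm_ne_zero_iff.mpr hgrad))
  rwa [hcos] at hlim

/-- For `d ≥ 3`, at a boundary point the cosine of the angle between the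
population gradient-direction estimate `g(δ)` and the true gradient `∇S(x_t)` tends
to `1` as `δ → 0⁺`; in particular `g(δ) ≠ 0` for all sufficiently small `δ > 0`. -/
theorem stmt_0 (d : ℕ) (hd : 3 ≤ d) (L : ℝ) (hL : 0 < L)
    (S : EuclideanSpace ℝ (Fin d) → ℝ) (hS : Differentiable ℝ S)
    (hLip : ∀ x y : EuclideanSpace ℝ (Fin d),
      ‖gradient S x - gradient S y‖ ≤ L * ‖x - y‖)
    (xt : EuclideanSpace ℝ (Fin d)) (hxt : S xt = 0) (hgrad : gradient S xt ≠ 0) :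
    Tendsto (fun δ : ℝ =>
        ⟪gEst d S xt δ, gradient S xt⟫ / (‖gEst d S xt δ‖ * ‖gradient S xt‖))
      (nhdsWithin 0 (Set.Ioi 0)) (nhds 1)
    ∧ ∀ᶠ (δ : ℝ) in nhdsWithin 0 (Set.Ioi 0), gEst d S xt δ ≠ 0 :=
  stmt_0_general d L S hS hLip xt hxt hgrad
end

section
/- Let V be a real inner product space, let v ∈ V with ‖v‖ = 1, let c > 0 and 0 ≤ ε ≤ c, and let a ∈ V satisfy ‖a − c·v‖ ≤ ε. Then ⟪a, v⟫ ≥ ‖a‖ · √(1 − ε²/c²); in particular, if a ≠ 0 the cosine of the angle between a and v is at least 1 − ε²/c². -/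
open scoped RealInnerProductSpace

/-- in a real inner product space, if `‖v‖ = 1`, `c > 0`,
`0 ≤ ε ≤ c` and `‖a − c·v‖ ≤ ε`, then `⟪a, v⟫ ≥ ‖a‖·√(1 − ε²/c²)`; in particular,
if `a ≠ 0` the cosine of the angle between `a` and `v` is at least `1 − ε²/c²`. -/
theorem stmt_12 {V : Type*} [NormedAddCommGroup V] [InnerProductSpace ℝ V]
    (v : V) (hv : ‖v‖ = 1) (c ε : ℝ) (hc : 0 < c) (hε0 : 0 ≤ ε) (hεc : ε ≤ c)
    (a : V) (ha : ‖a - c • v‖ ≤ ε) :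
    ⟪a, v⟫ ≥ ‖a‖ * Real.sqrt (1 - ε ^ 2 / c ^ 2) ∧
      (a ≠ 0 → ⟪a, v⟫ / (‖a‖ * ‖v‖) ≥ 1 - ε ^ 2 / c ^ 2) := by
  set t : ℝ := ⟪a, v⟫ with ht
  have hs : (0:ℝ) ≤ 1 - ε ^ 2 / c ^ 2 := by
    have : ε ^ 2 ≤ c ^ 2 := by nlinarith
    have hc2 : (0:ℝ) < c ^ 2 := by positivity
    rw [sub_nonneg, div_le_one hc2]; exact this
  set r : ℝ := Real.sqrt (1 - ε ^ 2 / c ^ 2) with hr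
  have hr0 : 0 ≤ r := Real.sqrt_nonneg _
  have hr2 : r ^ 2 = 1 - ε ^ 2 / c ^ 2 := Real.sq_sqrt hs
  -- expand norm
  have hexp : ‖a - c • v‖ ^ 2 = ‖a‖ ^ 2 - 2 * c * t + c ^ 2 := by
    rw [norm_sub_pow_two_real, real_inner_smul_right, norm_smul, hv, ← ht]
    simp [abs_of_pos hc]
    ring
  have hna : ‖a - c • v‖ ^ 2 ≤ ε ^ 2 := by
    have := norm_nonneg (a - c • v)
    nlinarith
  have hkey : ‖a‖ ^ 2 ≤ 2 * c * t - c ^ 2 + ε ^ 2 := by nlinarith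
  -- t ≥ c - ε
  have htl : c - ε ≤ t := by
    have h1 : |⟪a - c • v, v⟫| ≤ ‖a - c • v‖ * ‖v‖ := abs_real_inner_le_norm _ _
    rw [inner_sub_left, real_inner_smul_left, real_inner_self_eq_norm_sq, hv] at h1
    simp at h1
    have := abs_le.mp (h1.trans ha)
    linarith [this.1]
  have ht0 : 0 ≤ t := by linarith
  have hmain : ‖a‖ * r ≤ t := by
    have hsq : (‖a‖ * r) ^ 2 ≤ t ^ 2 := by
      have hc2 : (0:ℝ) < c ^ 2 := by positivity
      have h1 : (‖a‖ * r) ^ 2 = ‖a‖ ^ 2 * (1 - ε ^ 2 / c ^ 2) := by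
        rw [mul_pow, hr2]
      have h2 : c ^ 2 * (‖a‖ ^ 2 * (1 - ε ^ 2 / c ^ 2)) = ‖a‖ ^ 2 * (c ^ 2 - ε ^ 2) := by
        field_simp
      have hec : ε ^ 2 ≤ c ^ 2 := by nlinarith
      have h3 : ‖a‖ ^ 2 * (c ^ 2 - ε ^ 2) ≤ (2 * c * t - c ^ 2 + ε ^ 2) * (c ^ 2 - ε ^ 2) :=
        mul_le_mul_of_nonneg_right hkey (by linarith)
      nlinarith [sq_nonneg (c * t - (c ^ 2 - ε ^ 2))]
    calc ‖a‖ * r = Real.sqrt ((‖a‖ * r) ^ 2) := by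
          rw [Real.sqrt_sq (mul_nonneg (norm_nonneg a) hr0)]
      _ ≤ Real.sqrt (t ^ 2) := Real.sqrt_le_sqrt hsq
      _ = t := Real.sqrt_sq ht0
  refine ⟨hmain, fun hane => ?_⟩
  have hna0 : 0 < ‖a‖ := norm_pos_iff.mpr hane
  rw [hv, mul_one, ge_iff_le, le_div_iff₀ hna0]
  have hrge : 1 - ε ^ 2 / c ^ 2 ≤ r := by
    have hs1 : (0:ℝ) ≤ ε ^ 2 / c ^ 2 := by positivity
    have hr1 : r ≤ 1 := by nlinarith
    nlinarith [mul_le_mul_of_nonneg_left hr1 hr0]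
  calc (1 - ε ^ 2 / c ^ 2) * ‖a‖ ≤ r * ‖a‖ := by
        exact mul_le_mul_of_nonneg_right hrge (norm_nonneg a)
    _ ≤ t := by rw [mul_comm]; exact hmain
end
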